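/- Let M_g = 0.025791 and define d^g on C ∪ F as the weighted shortest-path distance between blocks in the weighted graph whose vertices are the blocks {d}, {a,b,f}, {c,e}, B2 = {4,5,6}, {7}, {g}, B1 = {1,2,3}, with edges of weight M_g: d–B2, g–B2, g–7, {a,b,f}–7, {a,b,f}–B1, g–B1, {c,e}–B1, and edges of weight 2·M_g: d–{a,b,f}, d–{c,e} (points in the same block are at distance 0). Then d^g is a pseudometric on C ∪ F, d^g is consistent with σ*, Σ_{j∈C} d^g(g,j) = 7·M_g > 0, and facility g minimizes Σ_{j∈C} d^g(o,j) over o ∈ F. -/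
import Mathlib


/-- Points of the instance: `Sum.inl j` is client `j`, `Sum.inr i` is facility `i`. -/
abbrev Pt := Fin 7 ⊕ Fin 7

/-- `d` is a pseudometric: nonnegative, symmetric, zero on the diagonal,
and satisfying the triangle inequality `d x y ≤ d x z + d y z`. -/
def IsPseudometric (d : Pt → Pt → ℝ) : Prop :=
  (∀ x y, 0 ≤ d x y) ∧ (∀ x y, d x y = d y x) ∧ (∀ x, d x x = 0) ∧
    (∀ x y z, d x y ≤ d x z + d y z)

/-- Rank function of the instance `I*` (facilities `a,…,g` are `0,…,6`):
clients 1,2,3 rank c ≻ e ≻ b ≻ a ≻ f ≻ g ≻ d, clients 4,5,6 rank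
d ≻ g ≻ f ≻ a ≻ e ≻ b ≻ c, client 7 ranks b ≻ a ≻ f ≻ g ≻ e ≻ c ≻ d. -/
def rkStar (j : Fin 7) : Fin 7 → ℕ :=
  if j.val ≤ 2 then ![3, 2, 0, 6, 1, 4, 5]
  else if j.val ≤ 5 then ![3, 5, 6, 0, 4, 2, 1]
  else ![1, 0, 5, 6, 4, 2, 3]

/-- The preference profile `σ*` of the instance `I*`: `a ≽_j b` iff `a` has
(weakly) smaller rank than `b` in client `j`'s list. -/
def sigmaStar (j : Fin 7) (a b : Fin 7) : Prop := rkStar j a ≤ rkStar j b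

/-- `d` is consistent with the profile `σ`: whenever client `j` prefers `a` to `b`,
facility `a` is at least as close to `j` as `b`. -/
def Consistent (d : Pt → Pt → ℝ) (σ : Fin 7 → Fin 7 → Fin 7 → Prop) : Prop :=
  ∀ j a b, σ j a b → d (Sum.inr a) (Sum.inl j) ≤ d (Sum.inr b) (Sum.inl j)

/-- Expected social cost of the distribution `q` under metric `d`. -/
def cost (d : Pt → Pt → ℝ) (q : Fin 7 → ℝ) : ℝ :=
  ∑ i, q i * ∑ j, d (Sum.inr i) (Sum.inl j)

/-- Total cost of the clients if facility `o` is chosen. -/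
def facCost (d : Pt → Pt → ℝ) (o : Fin 7) : ℝ :=
  ∑ j, d (Sum.inr o) (Sum.inl j)

/-- Optimal (minimum) total cost over all facilities. -/
noncomputable def OPT (d : Pt → Pt → ℝ) : ℝ :=
  Finset.univ.inf' Finset.univ_nonempty (facCost d)

/-- The block graph for `d^g`, with the two weight-`2·M_g` edges subdivided by the
auxiliary vertices `7` and `8` (so that `M_g` times the unweighted graph distance
between blocks equals the weighted shortest-path distance of the paper).  Vertices:
`0 = {d}`, `1 = {a,b,f}`, `2 = {c,e}`, `3 = B2 = {4,5,6}`, `4 = {7}`, `5 = {g}`,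
`6 = B1 = {1,2,3}`; edges of weight `M_g`: d–B2, g–B2, g–7, {a,b,f}–7, {a,b,f}–B1,
g–B1, {c,e}–B1; edges of weight `2·M_g` (subdivided through the auxiliary
vertices): d–{a,b,f} and d–{c,e}. -/
def graphG : SimpleGraph (Fin 9) :=
  SimpleGraph.fromRel (fun u v =>
    (u, v) ∈ ([(0, 3), (5, 3), (5, 4), (1, 4), (1, 6), (5, 6), (2, 6),
      (0, 7), (7, 1), (0, 8), (8, 2)] : List (Fin 9 × Fin 9)))

/-- The block of each point (clients 1,2,3 ↦ B1, clients 4,5,6 ↦ B2,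
client 7 ↦ {7}; facilities a,b,f ↦ {a,b,f}, c,e ↦ {c,e}, d ↦ {d}, g ↦ {g}). -/
def blkG : Pt → Fin 9
  | Sum.inl j => if j.val ≤ 2 then 6 else if j.val ≤ 5 then 3 else 4
  | Sum.inr i => ![1, 1, 2, 0, 2, 1, 5] i

/-- `d^g` is `M_g = 0.025791` times the graph distance between the blocks of the
two points in the subdivided block graph, i.e. the weighted shortest-path distance
between the blocks (points in the same block are at distance 0). -/
noncomputable def dG : Pt → Pt → ℝ :=
  fun x y => 0.025791 * (graphG.dist (blkG x) (blkG y) : ℝ)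

/-- Auxiliary: the edge list of `graphG`. -/
def Lg : List (Fin 9 × Fin 9) :=
  [(0, 3), (5, 3), (5, 4), (1, 4), (1, 6), (5, 6), (2, 6),
    (0, 7), (7, 1), (0, 8), (8, 2)]

/-- Auxiliary: the distance matrix of `graphG`. -/
def Dg : Fin 9 → Fin 9 → ℕ := fun u v =>
  ![![0,2,2,1,3,2,3,1,1],
    ![2,0,2,3,1,2,1,1,3],
    ![2,2,0,3,3,2,1,3,1],
    ![1,3,3,0,2,1,2,2,2],
    ![3,1,3,2,0,1,2,2,4],
    ![2,2,2,1,1,0,1,3,3],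
    ![3,1,1,2,2,1,0,2,2],
    ![1,1,3,2,2,3,2,0,2],
    ![1,3,1,2,4,3,2,2,0]] u v

lemma adjG_iff (u v : Fin 9) :
    graphG.Adj u v ↔ u ≠ v ∧ ((u, v) ∈ Lg ∨ (v, u) ∈ Lg) := by
  rw [graphG, SimpleGraph.fromRel_adj]; rfl

lemma Dg_lip : ∀ u v w : Fin 9,
    (u ≠ v ∧ ((u, v) ∈ Lg ∨ (v, u) ∈ Lg)) → Dg u w ≤ Dg v w + 1 := by decide

lemma Dg_self : ∀ u : Fin 9, Dg u u = 0 := by decide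

lemma Dg_eq_zero : ∀ u v : Fin 9, Dg u v = 0 → u = v := by decide

lemma Dg_step : ∀ u v : Fin 9, Dg u v ≠ 0 →
    ∃ w, (u ≠ w ∧ ((u, w) ∈ Lg ∨ (w, u) ∈ Lg)) ∧ Dg w v + 1 = Dg u v := by decide

lemma Dg_le_walk : ∀ {u v : Fin 9} (p : graphG.Walk u v), Dg u v ≤ p.length := by
  intro u v p
  induction p with
  | nil => simp [Dg_self]
  | @cons a b c h p ih =>
    have h' := (adjG_iff a b).mp h
    have := Dg_lip a b c h'
    simp only [SimpleGraph.Walk.length_cons]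
    omega

lemma Dg_walk : ∀ (n : ℕ) (u v : Fin 9), Dg u v = n →
    ∃ p : graphG.Walk u v, p.length = n := by
  intro n
  induction n with
  | zero =>
    intro u v h
    obtain rfl := Dg_eq_zero u v h
    exact ⟨.nil, rfl⟩
  | succ n ih =>
    intro u v h
    obtain ⟨w, hw, hD⟩ := Dg_step u v (by omega)
    obtain ⟨p, hp⟩ := ih w v (by omega)
    exact ⟨.cons ((adjG_iff u w).mpr hw) p, by simp [hp]⟩

lemma distG_eq (u v : Fin 9) : graphG.dist u v = Dg u v := by
  obtain ⟨p, hp⟩ := Dg_walk (Dg u v) u v rfl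
  have h1 : graphG.dist u v ≤ Dg u v := hp ▸ SimpleGraph.dist_le p
  have h2 : Dg u v ≤ graphG.dist u v := by
    obtain ⟨q, hq⟩ := SimpleGraph.Reachable.exists_walk_length_eq_dist ⟨p⟩
    exact hq ▸ Dg_le_walk q
  omega

lemma dG_eq (x y : Pt) : dG x y = 0.025791 * (Dg (blkG x) (blkG y) : ℝ) := by
  rw [dG, distG_eq]

lemma Dg_tri : ∀ a b c : Fin 9, Dg a b ≤ Dg a c + Dg b c := by decide

lemma Dg_symm : ∀ a b : Fin 9, Dg a b = Dg b a := by decide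

lemma consist_nat : ∀ j a b : Fin 7, rkStar j a ≤ rkStar j b →
    Dg (blkG (Sum.inr a)) (blkG (Sum.inl j)) ≤ Dg (blkG (Sum.inr b)) (blkG (Sum.inl j)) := by
  decide

lemma facCost_dG (o : Fin 7) :
    facCost dG o = 0.025791 * ((∑ j, Dg (blkG (Sum.inr o)) (blkG (Sum.inl j)) : ℕ) : ℝ) := by
  simp only [facCost, dG_eq, Nat.cast_sum, Finset.mul_sum]

lemma sum_g : (∑ j, Dg (blkG (Sum.inr 6)) (blkG (Sum.inl j)) : ℕ) = 7 := by decide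

lemma sum_ge : ∀ o : Fin 7, 7 ≤ (∑ j, Dg (blkG (Sum.inr o)) (blkG (Sum.inl j)) : ℕ) := by decide

/-- `d^g` is a pseudometric consistent with `σ*`, the total client cost
of facility `g` is `7 · M_g > 0`, and `g` minimizes the total client cost. -/
theorem dG_certificate :
    IsPseudometric dG ∧ Consistent dG sigmaStar ∧
      facCost dG 6 = 7 * 0.025791 ∧ 0 < facCost dG 6 ∧
      ∀ o : Fin 7, facCost dG 6 ≤ facCost dG o := by
  have hM : (0:ℝ) < 0.025791 := by norm_num
  have hg : facCost dG 6 = 7 * 0.025791 := by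
    rw [facCost_dG, sum_g]; norm_num
  refine ⟨⟨?_, ?_, ?_, ?_⟩, ?_, hg, ?_, ?_⟩
  · intro x y; rw [dG_eq]; positivity
  · intro x y; rw [dG_eq, dG_eq, Dg_symm]
  · intro x; rw [dG_eq, Dg_self]; norm_num
  · intro x y z
    rw [dG_eq, dG_eq, dG_eq, ← mul_add]
    have := Dg_tri (blkG x) (blkG y) (blkG z)
    have : (Dg (blkG x) (blkG y) : ℝ) ≤ Dg (blkG x) (blkG z) + Dg (blkG y) (blkG z) := by
      exact_mod_cast this
    nlinarith
  · intro j a b h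
    rw [dG_eq, dG_eq]
    have := consist_nat j a b h
    have : (Dg (blkG (Sum.inr a)) (blkG (Sum.inl j)) : ℝ) ≤
        Dg (blkG (Sum.inr b)) (blkG (Sum.inl j)) := by exact_mod_cast this
    nlinarith
  · rw [hg]; norm_num
  · intro o
    rw [hg, facCost_dG]
    have := sum_ge o
    have : (7:ℝ) ≤ (∑ j, Dg (blkG (Sum.inr o)) (blkG (Sum.inl j)) : ℕ) := by exact_mod_cast this
    nlinarith
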